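/- Suppose 0 < a ≤ b, a + b ≤ 1/2, and (3b-1)a² + (2b²-5b-1)a + b(1-b²) ≥ 0. Then (3a-b-1)/2 + (b+b²-2a²-3ab)/((1+b)(a+b)) ≥ 0. -/
import Mathlib

theorem algebraic_convexity_bound (a b : ℝ) (ha : 0 < a) (hab : a ≤ b)
    (hsum : a + b ≤ 1 / 2)
    (hpoly : 0 ≤ (3 * b - 1) * a ^ 2 + (2 * b ^ 2 - 5 * b - 1) * a + b * (1 - b ^ 2)) :
    0 ≤ (3 * a - b - 1) / 2 + (b + b ^ 2 - 2 * a ^ 2 - 3 * a * b) / ((1 + b) * (a + b)) := by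
  have hb : 0 < b := lt_of_lt_of_le ha hab
  have h1 : 0 < 1 + b := by linarith
  have h2 : 0 < a + b := by linarith
  have hd : 0 < (1 + b) * (a + b) := mul_pos h1 h2
  have key : (3 * a - b - 1) / 2 + (b + b ^ 2 - 2 * a ^ 2 - 3 * a * b) / ((1 + b) * (a + b))
      = ((3 * b - 1) * a ^ 2 + (2 * b ^ 2 - 5 * b - 1) * a + b * (1 - b ^ 2))
        / (2 * ((1 + b) * (a + b))) := by
    field_simp
    ring
  rw [key]
  exact div_nonneg hpoly (by positivity)
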